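/- For every split graph G = (C ∪ I, E), the hunter number and monotone hunter number satisfy |C| − 1 ≤ h(G) ≤ mh(G) ≤ |C|. -/

import Mathlib

open SimpleGraph

namespace HuntersRabbit

universe u

variable {V : Type u}

/-- `shots S i` is the set `S_{i+1}` shot at (paper, 1-indexed) round `i+1`. -/
def shots (S : List (Finset V)) (i : ℕ) : Finset V := S.getD i ∅

/-- A hunter strategy is a finite sequence of nonempty subsets of vertices. -/
def ValidStrategy (S : List (Finset V)) : Prop := ∀ s ∈ S, s.Nonempty

/-- The hunter strategy `S` uses at most `k` hunters. -/
def Uses (S : List (Finset V)) (k : ℕ) : Prop := ∀ s ∈ S, s.card ≤ k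

/-- A rabbit trajectory of length `ℓ` starting from `W`: a walk `r 0, r 1, …, r ℓ`
with `r 0 ∈ W` (only the values at `0, …, ℓ` are relevant). -/
def Trajectory (G : SimpleGraph V) (W : Set V) (ℓ : ℕ) (r : ℕ → V) : Prop :=
  r 0 ∈ W ∧ ∀ i, i < ℓ → G.Adj (r i) (r (i + 1))

/-- The hunter strategy `S = (S_1, …, S_ℓ)` is winning with respect to `W`:
every rabbit trajectory `(r_0, …, r_ℓ)` starting from `W` satisfies
`r_j ∈ S_{j+1}` for some `0 ≤ j < ℓ`. -/
def IsWinning (G : SimpleGraph V) (W : Set V) (S : List (Finset V)) : Prop :=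
  ∀ r : ℕ → V, Trajectory G W S.length r → ∃ j, j < S.length ∧ r j ∈ shots S j

/-- The contaminated sets: `Zset G W S 0 = W` and
`Zset G W S (i+1) = {x | ∃ y ∈ Zset G W S i \ S_{i+1}, y ~ x}`. -/
def Zset (G : SimpleGraph V) (W : Set V) (S : List (Finset V)) : ℕ → Set V
  | 0 => W
  | i + 1 => {x | ∃ y ∈ Zset G W S i, y ∉ shots S i ∧ G.Adj y x}

/-- `v` is cleared at (paper) round `i+1`: either `v ∈ S_{i+1}`, or
`N(v) ∩ Z_i` is nonempty and contained in `S_{i+1}`. -/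
def ClearedAt (G : SimpleGraph V) (W : Set V) (S : List (Finset V)) (v : V) (i : ℕ) : Prop :=
  v ∈ shots S i ∨
    ((G.neighborSet v ∩ Zset G W S i).Nonempty ∧
      G.neighborSet v ∩ Zset G W S i ⊆ ↑(shots S i))

/-- The strategy is monotone: whenever `v` is cleared at some round and `v ∈ Z_j`
for some later (or equal) round `j`, then `v ∈ S_{j+1}`. -/
def IsMonotoneStrat (G : SimpleGraph V) (W : Set V) (S : List (Finset V)) : Prop :=
  ∀ v : V, ∀ i j : ℕ, i < S.length → i < j → j < S.length →
    ClearedAt G W S v i → v ∈ Zset G W S j → v ∈ shots S j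

/-- The hunter number `h_W(G)`: the minimum `k` such that some winning hunter
strategy with respect to `W` uses `k` hunters (with the convention that it is `0`
for a one-vertex graph). -/
noncomputable def hunterNumW (G : SimpleGraph V) (W : Set V) : ℕ :=
  if Nat.card V = 1 then 0
  else sInf {k | ∃ S : List (Finset V), ValidStrategy S ∧ IsWinning G W S ∧ Uses S k}

/-- The hunter number `h(G) = h_V(G)`. -/
noncomputable def hunterNum (G : SimpleGraph V) : ℕ := hunterNumW G Set.univ

/-- The monotone hunter number `mh_W(G)`. -/
noncomputable def mhunterNumW (G : SimpleGraph V) (W : Set V) : ℕ :=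
  if Nat.card V = 1 then 0
  else sInf {k | ∃ S : List (Finset V),
    ValidStrategy S ∧ IsWinning G W S ∧ IsMonotoneStrat G W S ∧ Uses S k}

/-- The monotone hunter number `mh(G) = mh_V(G)`. -/
noncomputable def mhunterNum (G : SimpleGraph V) : ℕ := mhunterNumW G Set.univ

/-- `(C, I)` is a split partition of `G`: the vertex set is partitioned into `C`,
inducing an inclusion-maximal clique, and an independent set `I`. -/
def IsSplitPartition (G : SimpleGraph V) (C I : Finset V) : Prop :=
  (∀ v : V, v ∈ C ∨ v ∈ I) ∧ (∀ v : V, ¬(v ∈ C ∧ v ∈ I)) ∧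
  G.IsClique (↑C : Set V) ∧
  (∀ D : Finset V, C ⊆ D → G.IsClique (↑D : Set V) → D = C) ∧
  (∀ u ∈ I, ∀ v ∈ I, ¬ G.Adj u v)

lemma shots_card_le {S : List (Finset V)} {k : ℕ} (hU : Uses S k) (i : ℕ) :
    (shots S i).card ≤ k := by
  unfold shots
  rcases lt_or_ge i S.length with h | h
  · rw [List.getD_eq_getElem _ _ h]
    exact hU _ (List.getElem_mem _)
  · rw [List.getD_eq_default _ _ h]
    simp

lemma lower_bound {V : Type} [Fintype V] [DecidableEq V] (G : SimpleGraph V) (C : Finset V)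
    (hclq : G.IsClique (↑C : Set V)) {S : List (Finset V)} {k : ℕ}
    (hwin : IsWinning G Set.univ S) (hU : Uses S k) : C.card - 1 ≤ k := by
  by_contra hlt
  have hk2 : k + 2 ≤ C.card := by omega
  have hA : ∀ i, 2 ≤ (C \ shots S i).card := by
    intro i
    have h1 := shots_card_le hU i
    have h2 : C.card - (shots S i).card ≤ (C \ shots S i).card :=
      Finset.le_card_sdiff _ _
    omega
  have hA0 : (C \ shots S 0).Nonempty := Finset.card_pos.mp (by have := hA 0; omega)
  have hA1 : ∀ n (v : V), ((C \ shots S (n + 1)).erase v).Nonempty := by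
    intro n v
    apply Finset.card_pos.mp
    have h1 := hA (n + 1)
    have h2 := Finset.pred_card_le_card_erase (a := v) (s := C \ shots S (n + 1))
    omega
  let f : ℕ → V := fun n => Nat.rec (motive := fun _ => V) hA0.choose
      (fun n prev => (hA1 n prev).choose) n
  have hmem : ∀ n, f n ∈ C \ shots S n := by
    intro n
    cases n with
    | zero => exact hA0.choose_spec
    | succ m => exact Finset.mem_of_mem_erase (hA1 m (f m)).choose_spec
  have hne : ∀ n, f (n + 1) ≠ f n := fun n =>
    Finset.ne_of_mem_erase (hA1 n (f n)).choose_spec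
  have htraj : Trajectory G Set.univ S.length f := by
    refine ⟨Set.mem_univ _, fun i _ => ?_⟩
    have h1 := Finset.mem_sdiff.mp (hmem i)
    have h2 := Finset.mem_sdiff.mp (hmem (i + 1))
    exact hclq (Finset.mem_coe.mpr h1.1) (Finset.mem_coe.mpr h2.1) (Ne.symm (hne i))
  obtain ⟨j, hj, hjs⟩ := hwin f htraj
  exact (Finset.mem_sdiff.mp (hmem j)).2 hjs

lemma witness_strategy {V : Type} [Fintype V] (G : SimpleGraph V) (hG : G.Connected)
    (C I : Finset V) (hsplit : IsSplitPartition G C I) :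
    ValidStrategy [C, C] ∧ IsWinning G Set.univ [C, C] ∧
      IsMonotoneStrat G Set.univ [C, C] ∧ Uses [C, C] C.card := by
  obtain ⟨hpart, _hdisj, hclq, hmax, hind⟩ := hsplit
  have hVne : Nonempty V := hG.nonempty
  obtain ⟨v0⟩ := hVne
  have hCne : C.Nonempty := by
    rcases Finset.eq_empty_or_nonempty C with rfl | h
    · exfalso
      have h1 : G.IsClique (↑({v0} : Finset V) : Set V) := by
        simp only [Finset.coe_singleton]
        exact G.isClique_singleton v0
      have := hmax {v0} (Finset.empty_subset _) h1
      simp at this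
    · exact h
  have hshot0 : shots [C, C] 0 = C := rfl
  have hshot1 : shots [C, C] 1 = C := rfl
  refine ⟨?_, ?_, ?_, ?_⟩
  · intro s hs
    simp only [List.mem_cons, List.mem_singleton, List.not_mem_nil, or_false] at hs
    rcases hs with rfl | rfl <;> exact hCne
  · intro r ⟨_, hadj⟩
    by_cases h0 : r 0 ∈ C
    · exact ⟨0, by simp, by rwa [hshot0]⟩
    · have hI0 : r 0 ∈ I := (hpart (r 0)).resolve_left h0
      have hadj01 : G.Adj (r 0) (r 1) := hadj 0 (by simp)
      have h1 : r 1 ∈ C := by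
        rcases hpart (r 1) with h | h
        · exact h
        · exact absurd hadj01 (hind _ hI0 _ h)
      exact ⟨1, by simp, by rwa [hshot1]⟩
  · intro v i j hi hij hj _ hz
    simp only [List.length_cons, List.length_nil] at hi hj
    have hj1 : j = 1 := by omega
    subst hj1
    obtain ⟨y, _, hyn, hadj⟩ := hz
    rw [hshot0] at hyn
    have hyI : y ∈ I := (hpart y).resolve_left hyn
    rw [hshot1]
    rcases hpart v with h | h
    · exact h
    · exact absurd hadj (hind _ hyI _ h)
  · intro s hs
    simp only [List.mem_cons, List.mem_singleton, List.not_mem_nil, or_false] at hs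
    rcases hs with rfl | rfl <;> exact le_refl _

/-- For every split graph `G = (C ∪ I, E)`,
`|C| − 1 ≤ h(G) ≤ mh(G) ≤ |C|`. -/
theorem split_hunter_bounds {V : Type} [Fintype V]
    (G : SimpleGraph V) (hG : G.Connected) (C I : Finset V)
    (hsplit : IsSplitPartition G C I) :
    C.card - 1 ≤ hunterNum G ∧ hunterNum G ≤ mhunterNum G ∧ mhunterNum G ≤ C.card := by
  by_cases h1 : Nat.card V = 1
  · have hC1 : C.card ≤ 1 := by
      have := Finset.card_le_univ C
      rwa [← Nat.card_eq_fintype_card, h1] at this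
    simp only [hunterNum, hunterNumW, mhunterNum, mhunterNumW, if_pos h1]
    omega
  · obtain ⟨hval, hwin, hmono, huses⟩ := witness_strategy G hG C I hsplit
    set A := {k | ∃ S : List (Finset V),
      ValidStrategy S ∧ IsWinning G Set.univ S ∧ Uses S k} with hAdef
    set B := {k | ∃ S : List (Finset V),
      ValidStrategy S ∧ IsWinning G Set.univ S ∧ IsMonotoneStrat G Set.univ S ∧ Uses S k}
      with hBdef
    have hhA : hunterNum G = sInf A := by
      simp only [hunterNum, hunterNumW, if_neg h1]
      rfl
    have hhB : mhunterNum G = sInf B := by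
      simp only [mhunterNum, mhunterNumW, if_neg h1]
      rfl
    have hBmem : C.card ∈ B := ⟨[C, C], hval, hwin, hmono, huses⟩
    have hAmem : C.card ∈ A := ⟨[C, C], hval, hwin, huses⟩
    have hBinf : sInf B ∈ B := Nat.sInf_mem ⟨_, hBmem⟩
    have hAinf : sInf A ∈ A := Nat.sInf_mem ⟨_, hAmem⟩
    refine ⟨?_, ?_, ?_⟩
    · rw [hhA]
      classical
      obtain ⟨S, _, hw, hu⟩ := hAinf
      exact lower_bound G C hsplit.2.2.1 hw hu
    · rw [hhA, hhB]
      obtain ⟨S, hv', hw', _, hu'⟩ := hBinf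
      exact Nat.sInf_le ⟨S, hv', hw', hu'⟩
    · rw [hhB]
      exact Nat.sInf_le hBmem

end HuntersRabbit
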